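/- Let ρ ≠ 0 and α be real numbers and define Θ(ξ,η) = (√3/2)(ρξ − η/ρ) − α. Then on the open set where tanh²Θ > 1/3, the real-valued function φ(ξ,η) = (1/2)·ln[(3/2)·tanh²Θ − 1/2] satisfies the T2 Tzitzeica equation: 2 ∂²φ/∂ξ∂η = −(e^{2φ} − e^{−4φ}). This 'quasi-regular' solution is singular only on the two lines where tanh Θ = ±1/√3. -/

import Mathlib

/-! The solution is a travelling wave `φ = F(aξ + bη - α)` with `a = (√3/2)ρ`,
`b = -√3/(2ρ)`, so `φ_ξη = ab F''(Θ)` with `ab = -3/4`, and T2 reduces to the profile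
equation `(3/2) F'' = e^{2F} - e^{-4F}` for `F(θ) = ½ log((3/2) tanh²θ - 1/2)`.
Since `tanh' = 1 - tanh²`, this is a rational identity in `T = tanh θ`:
`F' = 3T(1 - T²)/(3T² - 1)` and `e^{2F} = (3T² - 1)/2`. -/

/-- The mixed second partial derivative ∂²f/∂ξ∂η (first in η, then in ξ). -/
noncomputable def mixedDeriv (f : ℝ → ℝ → ℝ) (ξ η : ℝ) : ℝ :=
  deriv (fun x => deriv (fun y => f x y) η) ξ

open Real Filter Topology

theorem Real.hasDerivAt_tanh (x : ℝ) : HasDerivAt tanh (1 - tanh x ^ 2) x := by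
  have hcosh : cosh x ≠ 0 := (cosh_pos x).ne'
  have h := (hasDerivAt_sinh x).div (hasDerivAt_cosh x) hcosh
  rw [show sinh / cosh = tanh from funext fun y => (tanh_eq_sinh_div_cosh y).symm] at h
  refine h.congr_deriv ?_
  rw [tanh_eq_sinh_div_cosh]
  field_simp

theorem Real.continuous_tanh : Continuous tanh :=
  continuous_iff_continuousAt.2 fun x => (hasDerivAt_tanh x).continuousAt

theorem mixedDeriv_comp_affine {F F' : ℝ → ℝ} {F'' a b k ξ η : ℝ}
    (hF : ∀ᶠ θ in 𝓝 (a * ξ + b * η + k), HasDerivAt F (F' θ) θ)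
    (hF' : HasDerivAt F' F'' (a * ξ + b * η + k)) :
    mixedDeriv (fun x y => F (a * x + b * y + k)) ξ η = a * b * F'' := by
  have hx : HasDerivAt (fun x => a * x + b * η + k) a ξ := by
    simpa using ((hasDerivAt_id ξ).const_mul a).add_const (b * η) |>.add_const k
  have hinner : (fun x => deriv (fun y => F (a * x + b * y + k)) η)
      =ᶠ[𝓝 ξ] fun x => b * F' (a * x + b * η + k) := by
    filter_upwards [hx.continuousAt.eventually hF] with x hFx
    have hy : HasDerivAt (fun y => a * x + b * y + k) b η := by
      simpa using (((hasDerivAt_id η).const_mul b).const_add (a * x)).add_const k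
    exact (hFx.comp η hy).deriv.trans (mul_comm _ _)
  rw [mixedDeriv, hinner.deriv_eq]
  exact ((hF'.comp ξ hx).const_mul b).deriv.trans (by ring)

noncomputable def quasiRegularProfile (θ : ℝ) : ℝ :=
  1 / 2 * log (3 / 2 * tanh θ ^ 2 - 1 / 2)

noncomputable def quasiRegularProfileDeriv (θ : ℝ) : ℝ :=
  3 * tanh θ * (1 - tanh θ ^ 2) / (3 * tanh θ ^ 2 - 1)

theorem hasDerivAt_quasiRegularProfile {θ : ℝ} (h : tanh θ ^ 2 ≠ 1 / 3) :
    HasDerivAt quasiRegularProfile (quasiRegularProfileDeriv θ) θ := by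
  have hP : 3 / 2 * tanh θ ^ 2 - 1 / 2 ≠ 0 := fun h' => h (by linarith)
  have := ((((hasDerivAt_tanh θ).pow 2).const_mul (3 / 2)).sub_const (1 / 2)).log hP
    |>.const_mul (1 / 2)
  simp only [Pi.pow_apply, Nat.cast_ofNat] at this
  refine this.congr_deriv ?_
  rw [quasiRegularProfileDeriv]
  field_simp
  ring

theorem exp_two_mul_quasiRegularProfile {θ : ℝ} (h : 1 / 3 < tanh θ ^ 2) :
    exp (2 * quasiRegularProfile θ) = 3 / 2 * tanh θ ^ 2 - 1 / 2 := by
  rw [quasiRegularProfile, ← mul_assoc, mul_one_div_cancel two_ne_zero, one_mul]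
  exact exp_log (by linarith)

theorem hasDerivAt_quasiRegularProfileDeriv {θ : ℝ} (h : 1 / 3 < tanh θ ^ 2) :
    HasDerivAt quasiRegularProfileDeriv
      (2 / 3 * (exp (2 * quasiRegularProfile θ) - exp (-4 * quasiRegularProfile θ))) θ := by
  have hexp : exp (-4 * quasiRegularProfile θ) = (exp (2 * quasiRegularProfile θ) ^ 2)⁻¹ := by
    rw [show -4 * quasiRegularProfile θ =
      -(2 * quasiRegularProfile θ + 2 * quasiRegularProfile θ) by ring, exp_neg, exp_add, sq]
  have hD : 3 * tanh θ ^ 2 - 1 ≠ 0 := by linarith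
  have ht := hasDerivAt_tanh θ
  have hquot := ((ht.const_mul 3).mul ((ht.pow 2).const_sub 1)).div
    (((ht.pow 2).const_mul 3).sub_const 1) hD
  simp only [Pi.mul_apply, Pi.pow_apply, Nat.cast_ofNat] at hquot
  refine hquot.congr_deriv ?_
  rw [hexp, exp_two_mul_quasiRegularProfile h]
  field_simp
  ring

/-- With `Θ = (√3/2)(ρξ - η/ρ) - α`, on the set where `tanh²Θ > 1/3` the
quasi-regular soliton `φ = (1/2)·ln[(3/2)tanh²Θ - 1/2]` satisfies the T2
Tzitzeica equation `2 φ_{ξη} = -(e^{2φ} - e^{-4φ})`. -/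
theorem stmt_16 (ρ α : ℝ) (hρ : ρ ≠ 0)
    (Θ : ℝ → ℝ → ℝ)
    (hΘ : ∀ ξ η : ℝ, Θ ξ η = (Real.sqrt 3 / 2) * (ρ * ξ - η / ρ) - α)
    (φ : ℝ → ℝ → ℝ)
    (hφ : ∀ ξ η : ℝ, φ ξ η =
      (1 / 2) * Real.log ((3 / 2) * Real.tanh (Θ ξ η) ^ 2 - 1 / 2)) :
    ∀ ξ η : ℝ, Real.tanh (Θ ξ η) ^ 2 > 1 / 3 →
      2 * mixedDeriv φ ξ η = -(Real.exp (2 * φ ξ η) - Real.exp (-4 * φ ξ η)) := by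
  intro ξ η hξη
  set a := √3 / 2 * ρ
  set b := -(√3 / 2 / ρ)
  have hΘ_affine : ∀ x y, Θ x y = a * x + b * y + -α := fun x y => by
    rw [hΘ]
    ring
  have hφ_comp : φ = fun x y => quasiRegularProfile (a * x + b * y + -α) := by
    funext x y
    rw [hφ, hΘ_affine, quasiRegularProfile]
  have hab : a * b = -3 / 4 := by
    simp only [a, b]
    field_simp
    norm_num
  have hregular : ∀ᶠ θ in 𝓝 (Θ ξ η), 1 / 3 < tanh θ ^ 2 :=
    (isOpen_lt continuous_const (continuous_tanh.pow 2)).mem_nhds hξη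
  rw [hΘ_affine] at hξη hregular
  rw [hφ_comp, mixedDeriv_comp_affine
    (hregular.mono fun θ hθ => hasDerivAt_quasiRegularProfile hθ.ne')
    (hasDerivAt_quasiRegularProfileDeriv hξη), hab]
  ring
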